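/- If r_SALP is an optimal solution to the SALP in penalized form, then ||J* − Φ r_SALP||_{1,ν} ≤ inf_{r∈ℝ^K, ψ∈Ψ} ||J* − Φr||_{∞,1/ψ} · ( ν^⊤ψ + 2(π_{μ*,ν}^⊤ψ + 1)(αβ(ψ) + 1)/(1−α) ). -/

import Mathlib

open Finset Matrix

noncomputable section

/-- The Bellman operator. -/
def bellmanT {X A : Type*} [Fintype X] [Fintype A] [Nonempty A]
    (g : X → A → ℝ) (P : A → X → X → ℝ) (α : ℝ) (J : X → ℝ) : X → ℝ :=
  fun x => Finset.univ.inf' Finset.univ_nonempty fun a => g x a + α * ∑ x', P a x x' * J x'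

/-- The Bellman operator of a stationary policy. -/
def polT {X A : Type*} [Fintype X]
    (g : X → A → ℝ) (P : A → X → X → ℝ) (α : ℝ) (μ : X → A) (J : X → ℝ) : X → ℝ :=
  fun x => g x (μ x) + α * ∑ x', P (μ x) x x' * J x'

/-- Transition matrix of a stationary policy. -/
def polMat {X A : Type*} (P : A → X → X → ℝ) (μ : X → A) : Matrix X X ℝ :=
  Matrix.of fun x x' => P (μ x) x x'

/-- Δ_μ = Σ_k (α P_μ)^k = (I - α P_μ)⁻¹. -/
def deltaMat {X A : Type*} [Fintype X] [DecidableEq X]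
    (P : A → X → X → ℝ) (α : ℝ) (μ : X → A) : Matrix X X ℝ :=
  ∑' k : ℕ, (α • polMat P μ) ^ k

/-- π_{μ,ν} = (1-α) ν^⊤ (I - α P_μ)⁻¹. -/
def piDist {X A : Type*} [Fintype X] [DecidableEq X]
    (P : A → X → X → ℝ) (α : ℝ) (μ : X → A) (ν : X → ℝ) : X → ℝ :=
  fun x => (1 - α) * ∑ x0, ν x0 * deltaMat P α μ x0 x

/-- Cost-to-go of policy μ: Σ_t α^t P_μ^t g_μ. -/
def Jpol {X A : Type*} [Fintype X] [DecidableEq X]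
    (g : X → A → ℝ) (P : A → X → X → ℝ) (α : ℝ) (μ : X → A) : X → ℝ :=
  fun x => ∑' t : ℕ, α ^ t * (((polMat P μ) ^ t) *ᵥ (fun y => g y (μ y))) x

/-- Linear combination of basis functions. -/
def phiR {X : Type*} {K : ℕ} (Φ : X → Fin K → ℝ) (r : Fin K → ℝ) : X → ℝ :=
  fun x => ∑ i, Φ x i * r i

/-- ν-weighted 1-norm. -/
def wnorm1 {X : Type*} [Fintype X] (ν J : X → ℝ) : ℝ := ∑ x, ν x * |J x|

/-- Max norm. -/
def supNorm {X : Type*} [Fintype X] [Nonempty X] (J : X → ℝ) : ℝ :=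
  Finset.univ.sup' Finset.univ_nonempty fun x => |J x|

/-- ψ-weighted max norm ‖J‖_{∞,1/ψ}. -/
def wsupNorm {X : Type*} [Fintype X] [Nonempty X] (ψ J : X → ℝ) : ℝ :=
  Finset.univ.sup' Finset.univ_nonempty fun x => |J x| / ψ x

/-- β(ψ) = max_{x,a} (Σ_{x'} P_a(x,x') ψ(x')) / ψ(x). -/
def betaPsi {X A : Type*} [Fintype X] [Nonempty X] [Fintype A] [Nonempty A]
    (P : A → X → X → ℝ) (ψ : X → ℝ) : ℝ :=
  Finset.univ.sup' Finset.univ_nonempty fun p : X × A => (∑ x', P p.2 p.1 x' * ψ x') / ψ p.1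

/-- Feasible values of the LP defining ℓ(r,θ). -/
def ellSet {X A : Type*} [Fintype X] [Fintype A] [Nonempty A] {K : ℕ}
    (g : X → A → ℝ) (P : A → X → X → ℝ) (α : ℝ) (π : X → ℝ)
    (Φ : X → Fin K → ℝ) (r : Fin K → ℝ) (θ : ℝ) : Set ℝ :=
  {v | ∃ (s : X → ℝ) (γ : ℝ), v = γ / (1 - α) ∧
    (∀ x, phiR Φ r x - bellmanT g P α (phiR Φ r) x ≤ s x + γ) ∧
    (∑ x, π x * s x ≤ θ) ∧ (∀ x, 0 ≤ s x)}

/-- ℓ(r,θ): optimal value of the LP (3.2). -/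
def ellVal {X A : Type*} [Fintype X] [Fintype A] [Nonempty A] {K : ℕ}
    (g : X → A → ℝ) (P : A → X → X → ℝ) (α : ℝ) (π : X → ℝ)
    (Φ : X → Fin K → ℝ) (r : Fin K → ℝ) (θ : ℝ) : ℝ :=
  sInf (ellSet g P α π Φ r θ)

/-!
Write `u = Φ r_SALP - J*` and `Δ = (I - α P_{μ*})⁻¹`. Feasibility together with `T ≤ T_{μ*}`
gives `u ≤ s̄ + α P_{μ*} u`, and the comparison principle for the discounted stochastic matrix
`α P_{μ*}` turns this into `u ≤ Δ s̄`. As `|d| ≤ d + 2 (-d)⁺`, the error `‖J* - Φ r_SALP‖_{1,ν}` is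
at most `ν⊤(J* - Φ r_SALP) + 2 π⊤s̄ / (1 - α)`, i.e. `ν⊤J*` minus the SALP objective at its
optimum. Optimality lets us replace `(r_SALP, s̄)` by any `r` with its least feasible slack
`s = (Φr - TΦr)⁺`, and if `|J* - Φr| ≤ ε ψ` then `s ≤ ε (α β(ψ) + 1) ψ`, since one Bellman step
inflates a `ψ`-weighted perturbation by at most `α β(ψ)`.
-/

section Comparison

variable {X : Type*} [Fintype X] [DecidableEq X] {Q : Matrix X X ℝ} {α : ℝ}

theorem summable_smul_pow_of_mem_rowStochastic (hQ : Q ∈ rowStochastic ℝ X)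
    (hα0 : 0 ≤ α) (hα1 : α < 1) : Summable fun k : ℕ => (α • Q) ^ k := by
  refine Pi.summable.2 fun x => Pi.summable.2 fun y => ?_
  refine (summable_geometric_of_lt_one hα0 hα1).of_nonneg_of_le (fun k => ?_) (fun k => ?_)
  · rw [smul_pow, Matrix.smul_apply, smul_eq_mul]
    exact mul_nonneg (pow_nonneg hα0 k) (nonneg_of_mem_rowStochastic (pow_mem hQ k))
  · rw [smul_pow, Matrix.smul_apply, smul_eq_mul]
    exact mul_le_of_le_one_right (pow_nonneg hα0 k) (le_one_of_mem_rowStochastic (pow_mem hQ k))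

theorem nonneg_of_smul_mulVec_le (hQ : Q ∈ rowStochastic ℝ X) (hα0 : 0 ≤ α) (hα1 : α < 1)
    {w : X → ℝ} (hw : α • Q *ᵥ w ≤ w) : 0 ≤ w := by
  cases isEmpty_or_nonempty X
  · exact fun x => isEmptyElim x
  obtain ⟨x₀, -, hmin⟩ := exists_min_image univ w univ_nonempty
  have hmean : w x₀ ≤ (Q *ᵥ w) x₀ :=
    calc w x₀ = ∑ y, Q x₀ y * w x₀ := by
          rw [← sum_mul, sum_row_of_mem_rowStochastic hQ, one_mul]
      _ ≤ ∑ y, Q x₀ y * w y := by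
          gcongr with y
          · exact nonneg_of_mem_rowStochastic hQ
          · exact hmin y (mem_univ y)
  have hx₀ : α * (Q *ᵥ w) x₀ ≤ w x₀ := hw x₀
  have hw₀ : 0 ≤ w x₀ := by nlinarith
  exact fun x => hw₀.trans (hmin x (mem_univ x))

theorem le_of_le_add_smul_mulVec (hQ : Q ∈ rowStochastic ℝ X) (hα0 : 0 ≤ α) (hα1 : α < 1)
    {s u v : X → ℝ} (hu : u ≤ s + α • Q *ᵥ u) (hv : v = s + α • Q *ᵥ v) : u ≤ v := by
  refine sub_nonneg.1 (nonneg_of_smul_mulVec_le hQ hα0 hα1 fun x => ?_)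
  have hux := hu x
  have hvx := congrFun hv x
  simp only [mulVec_sub, smul_sub, Pi.add_apply, Pi.sub_apply] at hux hvx ⊢
  linarith

end Comparison

section Bellman

variable {X A : Type*} [Fintype X] {P : A → X → X → ℝ} {α : ℝ} {g : X → A → ℝ}

theorem polT_eq_add_smul_mulVec (μ : X → A) (J : X → ℝ) :
    polT g P α μ J = (fun x => g x (μ x)) + α • polMat P μ *ᵥ J :=
  rfl

variable [Fintype A] [Nonempty A]

theorem bellmanT_le_polT (μ : X → A) (J : X → ℝ) : bellmanT g P α J ≤ polT g P α μ J :=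
  fun x => inf'_le _ (mem_univ (μ x))

variable [Nonempty X] {ψ : X → ℝ}

theorem abs_le_wsupNorm_mul (hψ : ∀ x, 0 < ψ x) (J : X → ℝ) (x : X) :
    |J x| ≤ wsupNorm ψ J * ψ x :=
  (div_le_iff₀ (hψ x)).1 (le_sup' (fun y => |J y| / ψ y) (mem_univ x))

theorem wsupNorm_nonneg (hψ : 0 ≤ ψ) (J : X → ℝ) : 0 ≤ wsupNorm ψ J := by
  obtain ⟨x⟩ := ‹Nonempty X›
  exact (div_nonneg (abs_nonneg _) (hψ x)).trans (le_sup' (fun y => |J y| / ψ y) (mem_univ x))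

theorem mulVec_le_betaPsi_mul (hψ : ∀ x, 0 < ψ x) (a : A) (x : X) :
    (P a *ᵥ ψ) x ≤ betaPsi P ψ * ψ x :=
  (div_le_iff₀ (hψ x)).1
    (le_sup' (fun p : X × A => (∑ x', P p.2 p.1 x' * ψ x') / ψ p.1) (mem_univ (x, a)))

theorem betaPsi_nonneg (hP0 : ∀ a x x', 0 ≤ P a x x') (hψ : 0 ≤ ψ) : 0 ≤ betaPsi P ψ := by
  obtain ⟨x⟩ := ‹Nonempty X›
  obtain ⟨a⟩ := ‹Nonempty A›
  refine le_trans ?_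
    (le_sup' (fun p : X × A => (∑ x', P p.2 p.1 x' * ψ x') / ψ p.1) (mem_univ (x, a)))
  exact div_nonneg (sum_nonneg fun y _ => mul_nonneg (hP0 a x y) (hψ y)) (hψ x)

theorem bellmanT_le_add_smul (hP0 : ∀ a x x', 0 ≤ P a x x') (hα0 : 0 ≤ α)
    (hψ : ∀ x, 0 < ψ x) {c : ℝ} (hc : 0 ≤ c) {J J' : X → ℝ} (h : J ≤ J' + c • ψ) :
    bellmanT g P α J ≤ bellmanT g P α J' + (α * c * betaPsi P ψ) • ψ := by
  intro x
  obtain ⟨a, -, ha⟩ := exists_mem_eq_inf' univ_nonempty fun a => g x a + α * (P a *ᵥ J') x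
  have hJ'x : bellmanT g P α J' x = g x a + α * (P a *ᵥ J') x := ha
  have hmono : (P a *ᵥ J) x ≤ (P a *ᵥ J') x + c * (P a *ᵥ ψ) x := by
    simp only [mulVec, dotProduct, mul_sum, ← sum_add_distrib]
    refine sum_le_sum fun y _ => ?_
    have hy := mul_le_mul_of_nonneg_left (h y) (hP0 a x y)
    simp only [Pi.add_apply, Pi.smul_apply, smul_eq_mul] at hy
    linarith
  calc bellmanT g P α J x ≤ g x a + α * (P a *ᵥ J) x := inf'_le _ (mem_univ a)
    _ ≤ g x a + α * ((P a *ᵥ J') x + c * (betaPsi P ψ * ψ x)) := by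
        gcongr
        exact hmono.trans (by gcongr; exact mulVec_le_betaPsi_mul hψ a x)
    _ = (bellmanT g P α J' + (α * c * betaPsi P ψ) • ψ) x := by
        rw [Pi.add_apply, Pi.smul_apply, smul_eq_mul, hJ'x]
        ring

theorem posPart_sub_bellmanT_le (hP0 : ∀ a x x', 0 ≤ P a x x') (hα0 : 0 ≤ α)
    (hψ : ∀ x, 0 < ψ x) {ε : ℝ} (hε0 : 0 ≤ ε) {J J' : X → ℝ} (hfix : bellmanT g P α J' = J')
    (hε : ∀ x, |J' x - J x| ≤ ε * ψ x) :
    (J - bellmanT g P α J)⁺ ≤ (ε * (α * betaPsi P ψ + 1)) • ψ := by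
  have hψ0 : 0 ≤ ψ := fun x => (hψ x).le
  have hβ := betaPsi_nonneg hP0 hψ0
  refine sup_le (fun x => ?_) (smul_nonneg (by positivity) hψ0)
  have hJ' : J' ≤ J + ε • ψ := fun y => by
    have := (abs_le.1 (hε y)).2
    simp only [Pi.add_apply, Pi.smul_apply, smul_eq_mul]
    linarith
  have hT := bellmanT_le_add_smul (g := g) hP0 hα0 hψ hε0 hJ' x
  have hJ := (abs_le.1 (hε x)).1
  rw [hfix] at hT
  simp only [Pi.sub_apply, Pi.add_apply, Pi.smul_apply, smul_eq_mul] at hT ⊢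
  linarith

theorem dotProduct_sub_add_penalty_le (hP0 : ∀ a x x', 0 ≤ P a x x') (hα0 : 0 ≤ α)
    (hα1 : α < 1) (hψ : ∀ x, 0 < ψ x) {ν π J J' : X → ℝ} (hν : 0 ≤ ν) (hπ : 0 ≤ π)
    (hfix : bellmanT g P α J' = J') :
    ν ⬝ᵥ (J' - J) + 2 * (π ⬝ᵥ (J - bellmanT g P α J)⁺) / (1 - α) ≤
      wsupNorm ψ (J' - J) * (ν ⬝ᵥ ψ + 2 * (π ⬝ᵥ ψ + 1) * (α * betaPsi P ψ + 1) / (1 - α)) := by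
  set ε := wsupNorm ψ (J' - J)
  have hε0 : 0 ≤ ε := wsupNorm_nonneg (fun x => (hψ x).le) _
  have hβ := betaPsi_nonneg hP0 (fun x => (hψ x).le)
  have hεc : 0 ≤ ε * (α * betaPsi P ψ + 1) := by positivity
  have hs := posPart_sub_bellmanT_le hP0 hα0 hψ hε0 hfix (abs_le_wsupNorm_mul hψ _)
  have h1α : 0 < 1 - α := sub_pos.2 hα1
  calc ν ⬝ᵥ (J' - J) + 2 * (π ⬝ᵥ (J - bellmanT g P α J)⁺) / (1 - α)
      ≤ ν ⬝ᵥ (ε • ψ) + 2 * (π ⬝ᵥ ((ε * (α * betaPsi P ψ + 1)) • ψ)) / (1 - α) := by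
        gcongr
        · exact dotProduct_le_dotProduct_of_nonneg_left
            (fun x => (le_abs_self _).trans (abs_le_wsupNorm_mul hψ _ x)) hν
        · exact dotProduct_le_dotProduct_of_nonneg_left hs hπ
    _ ≤ ε * (ν ⬝ᵥ ψ + 2 * (π ⬝ᵥ ψ + 1) * (α * betaPsi P ψ + 1) / (1 - α)) := by
        rw [dotProduct_smul, dotProduct_smul, smul_eq_mul, smul_eq_mul, mul_add ε (ν ⬝ᵥ ψ),
          mul_div_assoc']
        gcongr _ + ?_ / _
        nlinarith

end Bellman

section PolicyEvaluation

variable {X A : Type*} [Fintype X] [DecidableEq X] {P : A → X → X → ℝ} {α : ℝ} {μ : X → A}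

theorem polMat_mem_rowStochastic (hP0 : ∀ a x x', 0 ≤ P a x x')
    (hP1 : ∀ a x, ∑ x', P a x x' = 1) (μ : X → A) : polMat P μ ∈ rowStochastic ℝ X :=
  mem_rowStochastic_iff_sum.2 ⟨fun _ _ => hP0 _ _ _, fun _ => hP1 _ _⟩

theorem deltaMat_nonneg (hQ : polMat P μ ∈ rowStochastic ℝ X) (hα0 : 0 ≤ α) (hα1 : α < 1)
    (x y : X) : 0 ≤ deltaMat P α μ x y := by
  have hsum := summable_smul_pow_of_mem_rowStochastic hQ hα0 hα1
  have happ : deltaMat P α μ x y = ∑' k : ℕ, ((α • polMat P μ) ^ k) x y := by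
    rw [← tsum_apply (Pi.summable.1 hsum x), ← tsum_apply hsum]
    rfl
  refine happ ▸ tsum_nonneg fun k => ?_
  rw [smul_pow, Matrix.smul_apply, smul_eq_mul]
  exact mul_nonneg (pow_nonneg hα0 k) (nonneg_of_mem_rowStochastic (pow_mem hQ k))

theorem deltaMat_mulVec_eq_add (hQ : polMat P μ ∈ rowStochastic ℝ X) (hα0 : 0 ≤ α)
    (hα1 : α < 1) (s : X → ℝ) :
    deltaMat P α μ *ᵥ s = s + α • polMat P μ *ᵥ (deltaMat P α μ *ᵥ s) := by
  have h := congrArg (· *ᵥ s)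
    (summable_smul_pow_of_mem_rowStochastic hQ hα0 hα1).one_sub_mul_tsum_pow
  simp only [← mulVec_mulVec, sub_mulVec, one_mulVec, smul_mulVec] at h
  exact eq_add_of_sub_eq h

theorem piDist_dotProduct (ν s : X → ℝ) :
    piDist P α μ ν ⬝ᵥ s = (1 - α) * (ν ⬝ᵥ deltaMat P α μ *ᵥ s) := by
  have h : piDist P α μ ν = (1 - α) • (ν ᵥ* deltaMat P α μ) := rfl
  rw [h, smul_dotProduct, dotProduct_mulVec, smul_eq_mul]

theorem piDist_nonneg (hQ : polMat P μ ∈ rowStochastic ℝ X) (hα0 : 0 ≤ α) (hα1 : α < 1)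
    {ν : X → ℝ} (hν : 0 ≤ ν) : 0 ≤ piDist P α μ ν := fun x =>
  mul_nonneg (sub_nonneg.2 hα1.le)
    (sum_nonneg fun y _ => mul_nonneg (hν y) (deltaMat_nonneg hQ hα0 hα1 y x))

variable [Fintype A] [Nonempty A] {g : X → A → ℝ}

theorem sub_le_deltaMat_mulVec (hQ : polMat P μ ∈ rowStochastic ℝ X) (hα0 : 0 ≤ α)
    (hα1 : α < 1) {J J' s : X → ℝ} (hfix : polT g P α μ J' = J')
    (hJ : J ≤ bellmanT g P α J + s) : J - J' ≤ deltaMat P α μ *ᵥ s := by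
  refine le_of_le_add_smul_mulVec hQ hα0 hα1 ?_ (deltaMat_mulVec_eq_add hQ hα0 hα1 s)
  calc J - J' ≤ bellmanT g P α J + s - polT g P α μ J' := by rw [hfix]; exact sub_le_sub_right hJ _
    _ ≤ polT g P α μ J + s - polT g P α μ J' := by gcongr; exact bellmanT_le_polT μ J
    _ = s + α • polMat P μ *ᵥ (J - J') := by
        rw [polT_eq_add_smul_mulVec, polT_eq_add_smul_mulVec, mulVec_sub, smul_sub]
        abel

theorem wnorm1_sub_le (hQ : polMat P μ ∈ rowStochastic ℝ X) (hα0 : 0 ≤ α) (hα1 : α < 1)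
    {ν J J' s : X → ℝ} (hν : 0 ≤ ν) (hfix : polT g P α μ J' = J')
    (hJ : J ≤ bellmanT g P α J + s) (hs : 0 ≤ s) :
    wnorm1 ν (J' - J) ≤ ν ⬝ᵥ (J' - J) + 2 * (piDist P α μ ν ⬝ᵥ s) / (1 - α) := by
  have hJv := sub_le_deltaMat_mulVec hQ hα0 hα1 hfix hJ
  set v := deltaMat P α μ *ᵥ s with hv_def
  have hv : 0 ≤ v := fun x =>
    sum_nonneg fun y _ => mul_nonneg (deltaMat_nonneg hQ hα0 hα1 x y) (hs y)
  have habs : (fun x => |(J' - J) x|) ≤ (J' - J) + (2 : ℝ) • v := fun x => by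
    have hJvx := hJv x
    have hvx : 0 ≤ v x := hv x
    simp only [Pi.sub_apply, Pi.add_apply, Pi.smul_apply, smul_eq_mul] at hJvx ⊢
    rw [abs_le]
    constructor <;> linarith
  have h1α : 1 - α ≠ 0 := (sub_pos.2 hα1).ne'
  calc wnorm1 ν (J' - J) ≤ ν ⬝ᵥ ((J' - J) + (2 : ℝ) • v) :=
        dotProduct_le_dotProduct_of_nonneg_left habs hν
    _ = ν ⬝ᵥ (J' - J) + 2 * (piDist P α μ ν ⬝ᵥ s) / (1 - α) := by
        rw [dotProduct_add, dotProduct_smul, piDist_dotProduct, ← hv_def, smul_eq_mul]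
        field_simp

end PolicyEvaluation

theorem salp_strong_approximation_guarantee_general
    {X A : Type*} [Fintype X] [Nonempty X] [Fintype A] [Nonempty A] [DecidableEq X] {K : ℕ}
    (g : X → A → ℝ) (P : A → X → X → ℝ) (α : ℝ)
    (hα0 : 0 < α) (hα1 : α < 1)
    (hP0 : ∀ a x x', 0 ≤ P a x x') (hP1 : ∀ a x, ∑ x', P a x x' = 1)
    (Jstar : X → ℝ) (hJstar : bellmanT g P α Jstar = Jstar)
    (μs : X → A) (hμs : polT g P α μs Jstar = bellmanT g P α Jstar)
    (ν : X → ℝ) (hν0 : ∀ x, 0 ≤ ν x)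
    (Φ : X → Fin K → ℝ)
    -- (r_SALP, s̄) is an optimal solution of the penalized SALP (4.3):
    (rSALP : Fin K → ℝ) (sbar : X → ℝ)
    (hfeas : (∀ x, phiR Φ rSALP x ≤ bellmanT g P α (phiR Φ rSALP) x + sbar x) ∧
      (∀ x, 0 ≤ sbar x))
    (hopt : ∀ (r : Fin K → ℝ) (s : X → ℝ),
      (∀ x, phiR Φ r x ≤ bellmanT g P α (phiR Φ r) x + s x) → (∀ x, 0 ≤ s x) →
      ∑ x, ν x * phiR Φ r x - 2 * (∑ x, piDist P α μs ν x * s x) / (1 - α) ≤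
      ∑ x, ν x * phiR Φ rSALP x - 2 * (∑ x, piDist P α μs ν x * sbar x) / (1 - α)) :
    wnorm1 ν (fun x => Jstar x - phiR Φ rSALP x) ≤
      sInf {v | ∃ (r : Fin K → ℝ) (ψ : X → ℝ), (∀ x, 1 ≤ ψ x) ∧
        v = wsupNorm ψ (fun x => Jstar x - phiR Φ r x) *
          (∑ x, ν x * ψ x +
            2 * ((∑ x, piDist P α μs ν x * ψ x) + 1) * (α * betaPsi P ψ + 1) / (1 - α))} := by
  have hQ := polMat_mem_rowStochastic hP0 hP1 μs
  have hπ := piDist_nonneg hQ hα0.le hα1 hν0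
  refine le_csInf ⟨_, rSALP, 1, fun _ => le_rfl, rfl⟩ ?_
  rintro _ ⟨r, ψ, hψ, rfl⟩
  set s := (phiR Φ r - bellmanT g P α (phiR Φ r))⁺
  have hcomp : ν ⬝ᵥ phiR Φ r - 2 * (piDist P α μs ν ⬝ᵥ s) / (1 - α) ≤
      ν ⬝ᵥ phiR Φ rSALP - 2 * (piDist P α μs ν ⬝ᵥ sbar) / (1 - α) :=
    hopt r s (sub_le_iff_le_add'.1 (le_posPart _) : _ ≤ _ + s) (posPart_nonneg _ : 0 ≤ s)
  calc wnorm1 ν (Jstar - phiR Φ rSALP)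
      ≤ ν ⬝ᵥ (Jstar - phiR Φ rSALP) + 2 * (piDist P α μs ν ⬝ᵥ sbar) / (1 - α) :=
        wnorm1_sub_le hQ hα0.le hα1 hν0 (hμs.trans hJstar) hfeas.1 hfeas.2
    _ ≤ ν ⬝ᵥ (Jstar - phiR Φ r) + 2 * (piDist P α μs ν ⬝ᵥ s) / (1 - α) := by
        rw [dotProduct_sub, dotProduct_sub]
        linarith
    _ ≤ _ := dotProduct_sub_add_penalty_le hP0 hα0.le hα1 (fun x => one_pos.trans_le (hψ x))
        hν0 hπ hJstar

/-- Theorem 2: if r_SALP is optimal for the SALP in penalized form, then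
‖J* - Φ r_SALP‖_{1,ν} ≤ inf_{r,ψ∈Ψ} ‖J* - Φr‖_{∞,1/ψ}
  (ν^⊤ψ + 2(π_{μ*,ν}^⊤ψ + 1)(αβ(ψ) + 1)/(1-α)). -/
theorem salp_strong_approximation_guarantee
    {X A : Type*} [Fintype X] [Nonempty X] [Fintype A] [Nonempty A] [DecidableEq X] {K : ℕ}
    (g : X → A → ℝ) (P : A → X → X → ℝ) (α : ℝ)
    (hα0 : 0 < α) (hα1 : α < 1)
    (hP0 : ∀ a x x', 0 ≤ P a x x') (hP1 : ∀ a x, ∑ x', P a x x' = 1)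
    (Jstar : X → ℝ) (hJstar : bellmanT g P α Jstar = Jstar)
    (μs : X → A) (hμs : polT g P α μs Jstar = bellmanT g P α Jstar)
    (ν : X → ℝ) (hν0 : ∀ x, 0 ≤ ν x) (hν1 : ∑ x, ν x = 1)
    (Φ : X → Fin K → ℝ)
    (hone : ∃ r1 : Fin K → ℝ, ∀ x, phiR Φ r1 x = 1)
    -- (r_SALP, s̄) is an optimal solution of the penalized SALP (4.3):
    (rSALP : Fin K → ℝ) (sbar : X → ℝ)
    (hfeas : (∀ x, phiR Φ rSALP x ≤ bellmanT g P α (phiR Φ rSALP) x + sbar x) ∧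
      (∀ x, 0 ≤ sbar x))
    (hopt : ∀ (r : Fin K → ℝ) (s : X → ℝ),
      (∀ x, phiR Φ r x ≤ bellmanT g P α (phiR Φ r) x + s x) → (∀ x, 0 ≤ s x) →
      ∑ x, ν x * phiR Φ r x - 2 * (∑ x, piDist P α μs ν x * s x) / (1 - α) ≤
      ∑ x, ν x * phiR Φ rSALP x - 2 * (∑ x, piDist P α μs ν x * sbar x) / (1 - α)) :
    wnorm1 ν (fun x => Jstar x - phiR Φ rSALP x) ≤
      sInf {v | ∃ (r : Fin K → ℝ) (ψ : X → ℝ), (∀ x, 1 ≤ ψ x) ∧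
        v = wsupNorm ψ (fun x => Jstar x - phiR Φ r x) *
          (∑ x, ν x * ψ x +
            2 * ((∑ x, piDist P α μs ν x * ψ x) + 1) * (α * betaPsi P ψ + 1) / (1 - α))} :=
  salp_strong_approximation_guarantee_general g P α hα0 hα1 hP0 hP1 Jstar hJstar μs hμs ν hν0 Φ
    rSALP sbar hfeas hopt
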